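/- arXiv:2307.00719 — 2 statements merged into one kernel-verified Lean document; each statement's English description precedes it below -/
import Mathlib

section
/- Least-squares perturbation via subspace embedding (structural conditions lemma): Let A ∈ ℝ^{I×R} with I > R, let Y ∈ ℝ^{I×c}, and set OPT = min_X ‖AX − Y‖_F. Let U ∈ ℝ^{I×rank(A)} contain an orthonormal basis of the column space of A, let Y^⊥ = Y − UUᵀY be the residual of the optimal solution. Suppose Ψ ∈ ℝ^{m×I} satisfies (i) σ_min²(ΨU) ≥ 1/√2 and (ii) ‖UᵀΨᵀΨY^⊥‖_F² ≤ (ε/2)·OPT² for some ε ∈ (0,1). Then any minimizer X̃ of ‖ΨAX − ΨY‖_F satisfies ‖AX̃ − Y‖_F ≤ (1+ε)·OPT. -/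
open Matrix BigOperators
attribute [local instance] Matrix.frobeniusNormedAddCommGroup

section Helpers

/-- Frobenius norm squared equals trace of `Mᵀ * M`. -/
lemma fro_sq_trace {m n : ℕ} (M : Matrix (Fin m) (Fin n) ℝ) :
    ‖M‖ ^ 2 = (Mᵀ * M).trace := by
  have hdef := Matrix.frobenius_norm_def M
  have hS : (0:ℝ) ≤ ∑ i, ∑ j, ‖M i j‖ ^ (2:ℝ) := by
    refine Finset.sum_nonneg fun i _ => Finset.sum_nonneg fun j _ => ?_
    positivity
  have h1 : ‖M‖ ^ 2 = ∑ i, ∑ j, ‖M i j‖ ^ (2:ℝ) := by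
    rw [hdef, ← Real.rpow_natCast _ 2, ← Real.rpow_mul hS]
    norm_num
  rw [h1]
  have h2 : ∀ a : ℝ, ‖a‖ ^ (2:ℝ) = a ^ 2 := by
    intro a
    rw [Real.rpow_two, Real.norm_eq_abs, sq_abs]
  simp_rw [h2]
  simp only [Matrix.trace, Matrix.diag, Matrix.mul_apply, Matrix.transpose_apply]
  rw [Finset.sum_comm]
  simp [sq]

lemma trace_tmul_comm {m n : ℕ} (P Q : Matrix (Fin m) (Fin n) ℝ) :
    (Qᵀ * P).trace = (Pᵀ * Q).trace := by
  rw [← Matrix.trace_transpose (Qᵀ * P), Matrix.transpose_mul, Matrix.transpose_transpose]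

lemma fro_sq_sub {m n : ℕ} (P Q : Matrix (Fin m) (Fin n) ℝ) :
    ‖P - Q‖ ^ 2 = ‖P‖ ^ 2 - 2 * (Pᵀ * Q).trace + ‖Q‖ ^ 2 := by
  have h := trace_tmul_comm P Q
  rw [fro_sq_trace, fro_sq_trace, fro_sq_trace]
  simp only [Matrix.transpose_sub, Matrix.sub_mul, Matrix.mul_sub, Matrix.trace_sub]
  linarith

lemma fro_sq_add_smul {m n : ℕ} (P S : Matrix (Fin m) (Fin n) ℝ) (t : ℝ) :
    ‖P + t • S‖ ^ 2 = ‖P‖ ^ 2 + 2 * t * (Pᵀ * S).trace + t ^ 2 * ‖S‖ ^ 2 := by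
  have h := trace_tmul_comm P S
  rw [fro_sq_trace, fro_sq_trace, fro_sq_trace]
  simp only [Matrix.transpose_add, Matrix.transpose_smul, Matrix.add_mul, Matrix.mul_add,
    Matrix.trace_add, Matrix.smul_mul, Matrix.mul_smul, Matrix.trace_smul, smul_eq_mul,
    smul_smul]
  linear_combination t * h

lemma eq_zero_of_trace_tmul_self {m n : ℕ} (M : Matrix (Fin m) (Fin n) ℝ)
    (h : (Mᵀ * M).trace = 0) : M = 0 := by
  have h2 : ‖M‖ ^ 2 = 0 := by rw [fro_sq_trace]; exact h
  have h3 : ‖M‖ = 0 := by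
    have := pow_eq_zero_iff (n := 2) (by norm_num) |>.mp h2
    exact this
  exact norm_eq_zero.mp h3

/-- Quadratic form lower bound from eigenvalue lower bound, for real symmetric matrices. -/
lemma quad_lower {n : ℕ} {M : Matrix (Fin n) (Fin n) ℝ} (hM : M.IsHermitian) {cc : ℝ}
    (h : ∀ i, cc ≤ hM.eigenvalues i) (x : Fin n → ℝ) :
    cc * (x ⬝ᵥ x) ≤ x ⬝ᵥ M *ᵥ x := by
  set V : Matrix (Fin n) (Fin n) ℝ := (hM.eigenvectorUnitary : Matrix (Fin n) (Fin n) ℝ)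
  have hVV : V * star V = 1 := Matrix.mem_unitaryGroup_iff.mp (hM.eigenvectorUnitary).2
  have hps : (M - cc • 1).PosSemidef := by
    have h1 : M - cc • 1 =
        V * Matrix.diagonal (fun i => hM.eigenvalues i - cc) * Vᴴ := by
      have hsp := hM.spectral_theorem
      have hc1 : cc • (1 : Matrix (Fin n) (Fin n) ℝ) = V * (cc • 1) * star V := by
        rw [Matrix.mul_smul, Matrix.mul_one, Matrix.smul_mul, hVV]
      calc M - cc • 1
          = V * Matrix.diagonal (RCLike.ofReal ∘ hM.eigenvalues) * star V
            - V * (cc • 1) * star V := by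
              rw [← hc1]; exact congrArg (· - cc • 1) (hsp.trans (Unitary.conjStarAlgAut_apply _ _))
        _ = V * (Matrix.diagonal (RCLike.ofReal ∘ hM.eigenvalues) - cc • 1) * star V := by
            rw [Matrix.mul_sub, Matrix.sub_mul]
        _ = V * Matrix.diagonal (fun i => hM.eigenvalues i - cc) * Vᴴ := by
            rw [Matrix.smul_one_eq_diagonal, ← Matrix.diagonal_sub]
            rfl
    rw [h1]
    exact (Matrix.posSemidef_diagonal_iff.mpr fun i => sub_nonneg.mpr (h i)).mul_mul_conjTranspose_same V
  have h0 := hps.dotProduct_mulVec_nonneg x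
  have hsx : star x = x := by simp
  rw [hsx, Matrix.sub_mulVec, dotProduct_sub] at h0
  have hone : (cc • (1 : Matrix (Fin n) (Fin n) ℝ)) *ᵥ x = cc • x := by
    rw [Matrix.smul_mulVec, Matrix.one_mulVec]
  rw [hone, dotProduct_smul, smul_eq_mul] at h0
  linarith

end Helpers

set_option maxHeartbeats 1000000 in
/-- Structural-conditions lemma for sketched least squares: if `Ψ` satisfies
`σ_min²(ΨU) ≥ 1/√2` (formalized as all eigenvalues of `(ΨU)ᵀ(ΨU)` being `≥ 1/√2`) and
`‖UᵀΨᵀΨY^⊥‖_F² ≤ (ε/2)·OPT²`, then any minimizer `X̃` of the sketched problem is a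
`(1+ε)`-approximate minimizer of the original problem (Frobenius norms throughout). -/
theorem stmt_6 {I R c mm : ℕ} (hIR : R < I)
    (A : Matrix (Fin I) (Fin R) ℝ) (Y : Matrix (Fin I) (Fin c) ℝ)
    (U : Matrix (Fin I) (Fin A.rank) ℝ)
    (hU : Uᵀ * U = 1)
    (hcol : LinearMap.range A.mulVecLin = LinearMap.range U.mulVecLin)
    (Ψ : Matrix (Fin mm) (Fin I) ℝ)
    (ε : ℝ) (hε : ε ∈ Set.Ioo (0 : ℝ) 1)
    (OPT : ℝ) (hOPT : OPT = ⨅ X : Matrix (Fin R) (Fin c) ℝ, ‖A * X - Y‖)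
    (Yperp : Matrix (Fin I) (Fin c) ℝ) (hYperp : Yperp = Y - U * Uᵀ * Y)
    (hHerm : ((Ψ * U)ᵀ * (Ψ * U)).IsHermitian)
    (hcond1 : ∀ i, 1 / Real.sqrt 2 ≤ hHerm.eigenvalues i)
    (hcond2 : ‖Uᵀ * Ψᵀ * Ψ * Yperp‖ ^ 2 ≤ ε / 2 * OPT ^ 2)
    (X' : Matrix (Fin R) (Fin c) ℝ)
    (hmin : ∀ X : Matrix (Fin R) (Fin c) ℝ, ‖Ψ * A * X' - Ψ * Y‖ ≤ ‖Ψ * A * X - Ψ * Y‖) :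
    ‖A * X' - Y‖ ≤ (1 + ε) * OPT := by
  obtain ⟨hε0, hε1⟩ := hε
  -- Dm : U * Dm = A
  have hDcol : ∀ j : Fin R, ∃ y : Fin A.rank → ℝ, U.mulVec y = fun i => A i j := by
    intro j
    have hmem : (fun i => A i j) ∈ LinearMap.range A.mulVecLin := by
      refine ⟨Pi.single j 1, ?_⟩
      simp [Matrix.mulVecLin_apply, Matrix.mulVec_single]
      rfl
    rw [hcol] at hmem
    obtain ⟨y, hy⟩ := hmem
    exact ⟨y, hy⟩
  choose Dfun hDfun using hDcol
  set Dm : Matrix (Fin A.rank) (Fin R) ℝ := fun k j => Dfun j k with hDm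
  have hUD : U * Dm = A := by
    ext i j
    have := congrFun (hDfun j) i
    rw [Matrix.mul_apply]
    simpa [Matrix.mul_apply, Matrix.mulVec, dotProduct, hDm] using this
  -- Cm : A * Cm = U
  have hCcol : ∀ j : Fin A.rank, ∃ x : Fin R → ℝ, A.mulVec x = fun i => U i j := by
    intro j
    have hmem : (fun i => U i j) ∈ LinearMap.range U.mulVecLin := by
      refine ⟨Pi.single j 1, ?_⟩
      simp [Matrix.mulVecLin_apply, Matrix.mulVec_single]
      rfl
    rw [← hcol] at hmem
    obtain ⟨x, hx⟩ := hmem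
    exact ⟨x, hx⟩
  choose Cfun hCfun using hCcol
  set Cm : Matrix (Fin R) (Fin A.rank) ℝ := fun k j => Cfun j k with hCm
  have hAC : A * Cm = U := by
    ext i j
    have := congrFun (hCfun j) i
    rw [Matrix.mul_apply]
    simpa [Matrix.mul_apply, Matrix.mulVec, dotProduct, hCm] using this
  -- basic orthogonality facts
  have hUtYperp : Uᵀ * Yperp = 0 := by
    rw [hYperp, Matrix.mul_sub]
    have : Uᵀ * (U * Uᵀ * Y) = Uᵀ * Y := by
      rw [← Matrix.mul_assoc, ← Matrix.mul_assoc, hU, Matrix.one_mul]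
    rw [this, sub_self]
  have hkey : ∀ X : Matrix (Fin R) (Fin c) ℝ,
      A * X - Y = U * (Dm * X - Uᵀ * Y) - Yperp := by
    intro X
    rw [hYperp]
    simp only [Matrix.mul_sub, ← Matrix.mul_assoc]
    rw [hUD]
    abel
  -- squared-norm decomposition
  have hdecomp : ∀ X : Matrix (Fin R) (Fin c) ℝ,
      ‖A * X - Y‖ ^ 2 = ‖Dm * X - Uᵀ * Y‖ ^ 2 + ‖Yperp‖ ^ 2 := by
    intro X
    rw [hkey X, fro_sq_sub]
    have hcross : ((U * (Dm * X - Uᵀ * Y))ᵀ * Yperp).trace = 0 := by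
      rw [Matrix.transpose_mul, Matrix.mul_assoc, hUtYperp, Matrix.mul_zero,
        Matrix.trace_zero]
    have hUW : ‖U * (Dm * X - Uᵀ * Y)‖ ^ 2 = ‖Dm * X - Uᵀ * Y‖ ^ 2 := by
      rw [fro_sq_trace, fro_sq_trace, Matrix.transpose_mul, Matrix.mul_assoc,
        ← Matrix.mul_assoc Uᵀ U _, hU, Matrix.one_mul]
    rw [hcross, hUW]
    ring
  have hOPT0 : ∀ X : Matrix (Fin R) (Fin c) ℝ, ‖Yperp‖ ≤ ‖A * X - Y‖ := by
    intro X
    have h := hdecomp X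
    have hb2 : ‖Yperp‖ ^ 2 ≤ ‖A * X - Y‖ ^ 2 := by nlinarith [sq_nonneg ‖Dm * X - Uᵀ * Y‖]
    calc ‖Yperp‖ = Real.sqrt (‖Yperp‖ ^ 2) := (Real.sqrt_sq (norm_nonneg _)).symm
      _ ≤ Real.sqrt (‖A * X - Y‖ ^ 2) := Real.sqrt_le_sqrt hb2
      _ = ‖A * X - Y‖ := Real.sqrt_sq (norm_nonneg _)
  -- OPT = ‖Yperp‖
  have hOPTperp : OPT = ‖Yperp‖ := by
    have hbdd : BddBelow (Set.range fun X : Matrix (Fin R) (Fin c) ℝ => ‖A * X - Y‖) := by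
      refine ⟨0, ?_⟩
      rintro y ⟨X, rfl⟩
      exact norm_nonneg _
    refine le_antisymm ?_ ?_
    · -- OPT ≤ ‖Yperp‖ : witness X₀ with A X₀ = U UᵀY
      have hX0col : ∀ j : Fin c, ∃ x : Fin R → ℝ,
          A.mulVec x = fun i => (U * (Uᵀ * Y)) i j := by
        intro j
        have hmem : (fun i => (U * (Uᵀ * Y)) i j) ∈ LinearMap.range U.mulVecLin := by
          refine ⟨fun k => (Uᵀ * Y) k j, ?_⟩
          ext i
          simp [Matrix.mulVecLin_apply, Matrix.mulVec, dotProduct, Matrix.mul_apply]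
        rw [← hcol] at hmem
        obtain ⟨x, hx⟩ := hmem
        exact ⟨x, hx⟩
      choose X0fun hX0fun using hX0col
      set X0 : Matrix (Fin R) (Fin c) ℝ := fun k j => X0fun j k with hX0m
      have hAX0 : A * X0 = U * (Uᵀ * Y) := by
        ext i j
        have := congrFun (hX0fun j) i
        rw [Matrix.mul_apply]
        simpa [Matrix.mul_apply, Matrix.mulVec, dotProduct, hX0m] using this
      have hval : ‖A * X0 - Y‖ = ‖Yperp‖ := by
        have hneg : A * X0 - Y = -Yperp := by
          rw [hAX0, hYperp, Matrix.mul_assoc U Uᵀ Y]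
          abel
        rw [hneg, norm_neg]
      rw [hOPT]
      calc (⨅ X : Matrix (Fin R) (Fin c) ℝ, ‖A * X - Y‖) ≤ ‖A * X0 - Y‖ := ciInf_le hbdd X0
        _ = ‖Yperp‖ := hval
    · rw [hOPT]
      exact le_ciInf hOPT0
  have hOPTnn : 0 ≤ OPT := hOPTperp ▸ norm_nonneg Yperp
  -- normal equations for the sketched problem
  set B : Matrix (Fin mm) (Fin R) ℝ := Ψ * A with hB
  set Rm : Matrix (Fin mm) (Fin c) ℝ := Ψ * A * X' - Ψ * Y with hRm
  have hNEkey : ∀ E : Matrix (Fin R) (Fin c) ℝ, ((B * E)ᵀ * Rm).trace = 0 := by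
    intro E
    set a : ℝ := ((B * E)ᵀ * Rm).trace with ha
    set b : ℝ := ‖B * E‖ ^ 2 with hb
    have hbnn : 0 ≤ b := sq_nonneg _
    have hq : ∀ t : ℝ, 0 ≤ 2 * t * a + t ^ 2 * b := by
      intro t
      have h1 := hmin (X' + t • E)
      have h2 : Ψ * A * (X' + t • E) - Ψ * Y = Rm + t • (B * E) := by
        rw [Matrix.mul_add, hRm, hB, Matrix.mul_smul]
        abel
      rw [h2] at h1
      have h3 : ‖Rm‖ ^ 2 ≤ ‖Rm + t • (B * E)‖ ^ 2 :=
        pow_le_pow_left₀ (norm_nonneg _) h1 2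
      have h4 : ‖Rm + t • (B * E)‖ ^ 2 = ‖Rm‖ ^ 2 + 2 * t * (Rmᵀ * (B * E)).trace
          + t ^ 2 * ‖B * E‖ ^ 2 := fro_sq_add_smul Rm (B * E) t
      have h5 : (Rmᵀ * (B * E)).trace = a := by
        rw [ha, trace_tmul_comm]
      rw [h4, h5, ← hb] at h3
      linarith
    rcases eq_or_lt_of_le hbnn with hb0 | hb0
    · have h := hq (-a)
      rw [← hb0] at h
      nlinarith
    · have h := hq (-(a / b))
      have h2 : a ^ 2 ≤ 0 := by
        have hbne : b ≠ 0 := ne_of_gt hb0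
        field_simp at h
        nlinarith [mul_pos hb0 hb0]
      nlinarith [sq_nonneg a]
  have hNE : Bᵀ * Rm = 0 := by
    have h0 := hNEkey (Bᵀ * Rm)
    rw [Matrix.transpose_mul, Matrix.mul_assoc] at h0
    exact eq_zero_of_trace_tmul_self _ h0
  -- transfer normal equations through U
  have hNEU : Uᵀ * (Ψᵀ * Rm) = 0 := by
    have hUt : Uᵀ = Cmᵀ * Aᵀ := by rw [← Matrix.transpose_mul, hAC]
    rw [hUt, Matrix.mul_assoc]
    have : Aᵀ * (Ψᵀ * Rm) = 0 := by
      have : Bᵀ = Aᵀ * Ψᵀ := by rw [hB, Matrix.transpose_mul]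
      rw [this, Matrix.mul_assoc] at hNE
      exact hNE
    rw [this, Matrix.mul_zero]
  -- the sketched normal equation in terms of W and G
  set W : Matrix (Fin A.rank) (Fin c) ℝ := Dm * X' - Uᵀ * Y with hW
  set G : Matrix (Fin I) (Fin c) ℝ := Ψᵀ * (Ψ * Yperp) with hG
  set Mm : Matrix (Fin A.rank) (Fin A.rank) ℝ := (Ψ * U)ᵀ * (Ψ * U) with hMm
  have hMWG : Mm * W = Uᵀ * G := by
    have h6 : Rm = Ψ * (U * W) - Ψ * Yperp := by
      rw [hRm, Matrix.mul_assoc, ← Matrix.mul_sub, hkey X', Matrix.mul_sub, hW]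
    have h7 := hNEU
    rw [h6] at h7
    have h8 : Uᵀ * (Ψᵀ * (Ψ * (U * W) - Ψ * Yperp))
        = Mm * W - Uᵀ * G := by
      rw [Matrix.mul_sub, Matrix.mul_sub, hMm, hG]
      simp only [Matrix.transpose_mul, Matrix.mul_assoc]
    rw [h8] at h7
    exact sub_eq_zero.mp h7
  -- column-wise singular value bound
  have hsum : ∀ j : Fin c,
      (1 / 2 : ℝ) * (∑ i, (W i j) ^ 2) ≤ ∑ i, ((Uᵀ * G) i j) ^ 2 := by
    intro j
    set w : Fin A.rank → ℝ := fun i => W i j with hw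
    set g : Fin A.rank → ℝ := fun i => (Uᵀ * G) i j with hg
    have hMw : Mm *ᵥ w = g := by
      ext i
      have h9 : (Mm * W) i j = (Uᵀ * G) i j := by rw [hMWG]
      simpa [Matrix.mul_apply, Matrix.mulVec, dotProduct, hw, hg] using h9
    have hq := quad_lower hHerm hcond1 w
    rw [hMw] at hq
    have hCS := Finset.sum_mul_sq_le_sq_mul_sq Finset.univ w g
    have hww : w ⬝ᵥ w = ∑ i, w i ^ 2 := by simp [dotProduct, sq]
    have hwg : w ⬝ᵥ g = ∑ i, w i * g i := rfl
    have hSw : (0:ℝ) ≤ ∑ i, w i ^ 2 := Finset.sum_nonneg fun i _ => sq_nonneg _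
    have hSg : (0:ℝ) ≤ ∑ i, g i ^ 2 := Finset.sum_nonneg fun i _ => sq_nonneg _
    have hc0 : (0:ℝ) < 1 / Real.sqrt 2 := by positivity
    have hc0sq : (1 / Real.sqrt 2) ^ 2 = 1 / 2 := by
      rw [div_pow, one_pow, Real.sq_sqrt (by norm_num : (0:ℝ) ≤ 2)]
    rw [hww] at hq
    rw [hwg] at hq
    show (1 / 2 : ℝ) * (∑ i, w i ^ 2) ≤ ∑ i, g i ^ 2
    have h1 : (1 / Real.sqrt 2 * ∑ i, w i ^ 2) ^ 2 ≤ (∑ i, w i * g i) ^ 2 :=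
      pow_le_pow_left₀ (mul_nonneg hc0.le hSw) hq 2
    have h3 : (1 / 2 : ℝ) * (∑ i, w i ^ 2) ^ 2 ≤ (∑ i, w i ^ 2) * ∑ i, g i ^ 2 := by
      have h2 : (1 / Real.sqrt 2 * ∑ i, w i ^ 2) ^ 2
          = (1 / 2 : ℝ) * (∑ i, w i ^ 2) ^ 2 := by rw [mul_pow, hc0sq]
      rw [h2] at h1
      exact h1.trans hCS
    rcases eq_or_lt_of_le hSw with h0 | h0
    · rw [← h0]
      simpa using hSg
    · nlinarith [h3, h0]
  -- sum over columns : ‖W‖² ≤ 2 ‖UᵀG‖²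
  have hWnorm : ‖W‖ ^ 2 ≤ 2 * ‖Uᵀ * G‖ ^ 2 := by
    have hWs : ‖W‖ ^ 2 = ∑ j, ∑ i, (W i j) ^ 2 := by
      rw [fro_sq_trace]
      simp only [Matrix.trace, Matrix.diag, Matrix.mul_apply, Matrix.transpose_apply, sq]
    have hGs : ‖Uᵀ * G‖ ^ 2 = ∑ j, ∑ i, ((Uᵀ * G) i j) ^ 2 := by
      rw [fro_sq_trace]
      simp only [Matrix.trace, Matrix.diag, Matrix.mul_apply, Matrix.transpose_apply, sq]
    rw [hWs, hGs]
    have := Finset.sum_le_sum (fun j (_ : j ∈ Finset.univ) => hsum j)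
    rw [← Finset.mul_sum] at this
    linarith
  have hGbound : ‖Uᵀ * G‖ ^ 2 ≤ ε / 2 * OPT ^ 2 := by
    have : Uᵀ * G = Uᵀ * Ψᵀ * Ψ * Yperp := by
      rw [hG]
      simp only [Matrix.mul_assoc]
    rw [this]
    exact hcond2
  have hWfin : ‖W‖ ^ 2 ≤ ε * OPT ^ 2 := by linarith
  -- final assembly
  have hfinal : ‖A * X' - Y‖ ^ 2 = ‖W‖ ^ 2 + OPT ^ 2 := by
    rw [hdecomp X', hOPTperp, hW]
  have hsq : ‖A * X' - Y‖ ^ 2 ≤ ((1 + ε) * OPT) ^ 2 := by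
    nlinarith [mul_nonneg hε0.le (sq_nonneg OPT),
      mul_nonneg (mul_nonneg hε0.le hε0.le) (sq_nonneg OPT)]
  calc ‖A * X' - Y‖ = Real.sqrt (‖A * X' - Y‖ ^ 2) := (Real.sqrt_sq (norm_nonneg _)).symm
    _ ≤ Real.sqrt (((1 + ε) * OPT) ^ 2) := Real.sqrt_le_sqrt hsq
    _ = (1 + ε) * OPT := Real.sqrt_sq (by positivity)
end

section
/- Expected error of sampled approximate matrix multiplication: Let A ∈ ℝ^{I×a} and B ∈ ℝ^{I×b}, let q ∈ ℝ^I be a probability distribution with q(i) ≥ β‖A(i,:)‖₂²/‖A‖_F² for all i and some β ∈ (0,1]. Let Ψ ∈ ℝ^{m×I} be the random sampling-and-rescaling matrix that in each of m independent trials picks row i with probability q(i) and has corresponding row eᵢᵀ/√(m·q(i)). Then E‖AᵀB − AᵀΨᵀΨB‖_F² ≤ (1/(βm))·‖A‖_F²‖B‖_F². -/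
open Matrix BigOperators
attribute [local instance] Matrix.frobeniusNormedAddCommGroup

/-- The sampling-and-rescaling matrix determined by the sampled indices `ω`:
row `t` is `e_{ω(t)}ᵀ / √(m·q(ω(t)))`. -/
noncomputable def samplingMatrix {I m : ℕ} (q : Fin I → ℝ) (ω : Fin m → Fin I) :
    Matrix (Fin m) (Fin I) ℝ :=
  fun t i => if i = ω t then 1 / Real.sqrt (m * q (ω t)) else 0

lemma marg1 {I m : ℕ} (q : Fin I → ℝ) (hq1 : ∑ i : Fin I, q i = 1)
    (G : Fin I → ℝ) (s : Fin m) :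
    ∑ ω : Fin m → Fin I, (∏ t : Fin m, q (ω t)) * G (ω s) = ∑ i : Fin I, q i * G i := by
  have h : ∀ ω : Fin m → Fin I, (∏ t : Fin m, q (ω t)) * G (ω s)
      = ∏ t : Fin m, (q (ω t) * (if t = s then G (ω t) else 1)) := by
    intro ω
    rw [Finset.prod_mul_distrib, Finset.prod_ite_eq' Finset.univ s (fun t => G (ω t))]
    simp
  simp_rw [h]
  rw [← Fintype.prod_sum (fun t i => q i * (if t = s then G i else 1))]
  have h2 : ∀ t : Fin m, (∑ i : Fin I, q i * (if t = s then G i else 1))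
      = if t = s then ∑ i : Fin I, q i * G i else 1 := by
    intro t
    by_cases ht : t = s <;> simp [ht, hq1]
  simp_rw [h2]
  rw [Finset.prod_ite_eq' Finset.univ s (fun _ => ∑ i : Fin I, q i * G i)]
  simp

lemma marg2 {I m : ℕ} (q : Fin I → ℝ) (hq1 : ∑ i : Fin I, q i = 1)
    (G₁ G₂ : Fin I → ℝ) (s t : Fin m) (hst : s ≠ t) :
    ∑ ω : Fin m → Fin I, (∏ r : Fin m, q (ω r)) * (G₁ (ω s) * G₂ (ω t))
      = (∑ i : Fin I, q i * G₁ i) * (∑ i : Fin I, q i * G₂ i) := by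
  have h : ∀ ω : Fin m → Fin I, (∏ r : Fin m, q (ω r)) * (G₁ (ω s) * G₂ (ω t))
      = ∏ r : Fin m, (q (ω r) * (if r = s then G₁ (ω r) else 1)
          * (if r = t then G₂ (ω r) else 1)) := by
    intro ω
    rw [Finset.prod_mul_distrib, Finset.prod_mul_distrib,
      Finset.prod_ite_eq' Finset.univ s (fun r => G₁ (ω r)),
      Finset.prod_ite_eq' Finset.univ t (fun r => G₂ (ω r))]
    simp [mul_assoc]
  simp_rw [h]
  rw [← Fintype.prod_sum (fun r i => q i * (if r = s then G₁ i else 1)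
      * (if r = t then G₂ i else 1))]
  have h2 : ∀ r : Fin m, (∑ i : Fin I, q i * (if r = s then G₁ i else 1)
      * (if r = t then G₂ i else 1))
      = (if r = s then ∑ i : Fin I, q i * G₁ i else 1)
        * (if r = t then ∑ i : Fin I, q i * G₂ i else 1) := by
    intro r
    by_cases hs : r = s
    · subst hs
      simp [hst, hq1, Finset.sum_mul]
    · by_cases ht : r = t <;> simp [hs, ht, Ne.symm hst, hq1]
  simp_rw [h2]
  rw [Finset.prod_mul_distrib,
    Finset.prod_ite_eq' Finset.univ s (fun _ => ∑ i : Fin I, q i * G₁ i),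
    Finset.prod_ite_eq' Finset.univ t (fun _ => ∑ i : Fin I, q i * G₂ i)]
  simp

lemma exp_var {I m : ℕ} (hm : 0 < m) (q : Fin I → ℝ) (hq1 : ∑ i : Fin I, q i = 1)
    (Y : Fin I → ℝ) :
    ∑ ω : Fin m → Fin I, (∏ t : Fin m, q (ω t)) *
        ((∑ i : Fin I, q i * Y i) - (1 / m) * ∑ t : Fin m, Y (ω t)) ^ 2
      = (1 / m) * ((∑ i : Fin I, q i * Y i ^ 2) - (∑ i : Fin I, q i * Y i) ^ 2) := by
  set c : ℝ := ∑ i : Fin I, q i * Y i with hc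
  set Z : Fin I → ℝ := fun i => c - Y i with hZ
  have hmR : (m : ℝ) ≠ 0 := Nat.cast_ne_zero.mpr hm.ne'
  have hZsum : ∑ i : Fin I, q i * Z i = 0 := by
    simp only [hZ, mul_sub, Finset.sum_sub_distrib, ← Finset.sum_mul, hq1]
    ring
  have hZ2 : ∑ i : Fin I, q i * Z i ^ 2
      = (∑ i : Fin I, q i * Y i ^ 2) - c ^ 2 := by
    have : ∀ i, q i * Z i ^ 2 = q i * c ^ 2 - 2 * c * (q i * Y i) + q i * Y i ^ 2 := by
      intro i; simp only [hZ]; ring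
    simp_rw [this, Finset.sum_add_distrib, Finset.sum_sub_distrib, ← Finset.sum_mul,
      ← Finset.mul_sum, hq1]
    ring
  have key : ∀ ω : Fin m → Fin I,
      (∏ t : Fin m, q (ω t)) * (c - (1 / m) * ∑ t : Fin m, Y (ω t)) ^ 2
        = (1 / (m : ℝ) ^ 2) * ∑ s : Fin m, ∑ t : Fin m,
            (∏ r : Fin m, q (ω r)) * (Z (ω s) * Z (ω t)) := by
    intro ω
    have h1 : c - (1 / m) * ∑ t : Fin m, Y (ω t) = (1 / m) * ∑ t : Fin m, Z (ω t) := by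
      simp only [hZ, Finset.sum_sub_distrib, Finset.sum_const, Finset.card_univ,
        Fintype.card_fin, nsmul_eq_mul]
      field_simp
    rw [h1, mul_pow, pow_two (∑ t : Fin m, Z (ω t)), Fintype.sum_mul_sum]
    simp_rw [Finset.mul_sum]
    exact Finset.sum_congr rfl fun s _ => Finset.sum_congr rfl fun t _ => by ring
  simp_rw [key]
  rw [← Finset.mul_sum]
  have inner : ∀ s : Fin m, ∑ t : Fin m, ∑ ω : Fin m → Fin I,
      (∏ r : Fin m, q (ω r)) * (Z (ω s) * Z (ω t))
      = ∑ i : Fin I, q i * Z i ^ 2 := by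
    intro s
    have step : ∀ t : Fin m, ∑ ω : Fin m → Fin I,
        (∏ r : Fin m, q (ω r)) * (Z (ω s) * Z (ω t))
        = if t = s then ∑ i : Fin I, q i * Z i ^ 2 else 0 := by
      intro t
      by_cases hts : t = s
      · subst hts
        simp_rw [← pow_two]
        rw [marg1 q hq1 (fun i => Z i ^ 2) t]
        simp
      · rw [marg2 q hq1 Z Z s t (fun h => hts h.symm), hZsum]
        simp [hts]
    calc ∑ t : Fin m, ∑ ω : Fin m → Fin I,
        (∏ r : Fin m, q (ω r)) * (Z (ω s) * Z (ω t))
        = ∑ t : Fin m, if t = s then ∑ i : Fin I, q i * Z i ^ 2 else 0 :=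
          Finset.sum_congr rfl fun t _ => step t
      _ = ∑ i : Fin I, q i * Z i ^ 2 := by simp
  rw [show (∑ ω : Fin m → Fin I, ∑ s : Fin m, ∑ t : Fin m,
      (∏ r : Fin m, q (ω r)) * (Z (ω s) * Z (ω t)))
      = ∑ s : Fin m, ∑ t : Fin m, ∑ ω : Fin m → Fin I,
      (∏ r : Fin m, q (ω r)) * (Z (ω s) * Z (ω t)) from by
    rw [Finset.sum_comm]
    exact Finset.sum_congr rfl fun s _ => Finset.sum_comm]
  simp_rw [inner]
  rw [Finset.sum_const, Finset.card_univ, Fintype.card_fin, nsmul_eq_mul, hZ2]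
  field_simp

lemma fro_sq {n p : ℕ} (M : Matrix (Fin n) (Fin p) ℝ) :
    ‖M‖ ^ 2 = ∑ i : Fin n, ∑ j : Fin p, (M i j) ^ 2 := by
  rw [Matrix.frobenius_norm_def]
  have h0 : (0:ℝ) ≤ ∑ i : Fin n, ∑ j : Fin p, ‖M i j‖ ^ (2:ℝ) := by positivity
  rw [← Real.rpow_natCast ((∑ i : Fin n, ∑ j : Fin p, ‖M i j‖ ^ (2:ℝ)) ^ (1/2:ℝ)) 2,
    ← Real.rpow_mul h0]
  norm_num

lemma entry_eq {I a b m : ℕ} (hm : 0 < m)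
    (A : Matrix (Fin I) (Fin a) ℝ) (B : Matrix (Fin I) (Fin b) ℝ)
    (q : Fin I → ℝ) (hq0 : ∀ i, 0 ≤ q i) (ω : Fin m → Fin I) (j : Fin a) (k : Fin b) :
    (Aᵀ * (samplingMatrix q ω)ᵀ * samplingMatrix q ω * B) j k
      = (1 / m) * ∑ t : Fin m, A (ω t) j * B (ω t) k / q (ω t) := by
  have h1 : ∀ t : Fin m, (Aᵀ * (samplingMatrix q ω)ᵀ) j t
      = A (ω t) j * (1 / Real.sqrt (m * q (ω t))) := by
    intro t
    simp [Matrix.mul_apply, samplingMatrix]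
  have h2 : ∀ t : Fin m, (samplingMatrix q ω * B) t k
      = (1 / Real.sqrt (m * q (ω t))) * B (ω t) k := by
    intro t
    simp [Matrix.mul_apply, samplingMatrix]
  rw [Matrix.mul_assoc (Aᵀ * (samplingMatrix q ω)ᵀ), Matrix.mul_apply]
  simp_rw [h1, h2]
  rw [Finset.mul_sum]
  refine Finset.sum_congr rfl fun t _ => ?_
  have hx : (0:ℝ) ≤ (m : ℝ) * q (ω t) := mul_nonneg (by positivity) (hq0 _)
  have hs : (1 / Real.sqrt ((m:ℝ) * q (ω t))) * (1 / Real.sqrt ((m:ℝ) * q (ω t)))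
      = ((m:ℝ) * q (ω t))⁻¹ := by
    rw [div_mul_div_comm, one_mul, Real.mul_self_sqrt hx, one_div]
  have hmR : ((m:ℝ)) ≠ 0 := Nat.cast_ne_zero.mpr hm.ne'
  calc A (ω t) j * (1 / Real.sqrt ((m:ℝ) * q (ω t)))
        * ((1 / Real.sqrt ((m:ℝ) * q (ω t))) * B (ω t) k)
      = A (ω t) j * B (ω t) k * ((1 / Real.sqrt ((m:ℝ) * q (ω t)))
          * (1 / Real.sqrt ((m:ℝ) * q (ω t)))) := by ring
    _ = A (ω t) j * B (ω t) k * ((m:ℝ) * q (ω t))⁻¹ := by rw [hs]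
    _ = 1 / (m:ℝ) * (A (ω t) j * B (ω t) k / q (ω t)) := by
        rw [mul_inv]; field_simp

/-- Expected error of sampled approximate matrix multiplication:
`E‖AᵀB − AᵀΨᵀΨB‖_F² ≤ ‖A‖_F²‖B‖_F²/(βm)`, where the expectation is over `m` i.i.d.
indices drawn from the distribution `q` (written as an explicit weighted sum). -/
theorem stmt_7 {I a b m : ℕ} (hm : 0 < m)
    (A : Matrix (Fin I) (Fin a) ℝ) (B : Matrix (Fin I) (Fin b) ℝ)
    (q : Fin I → ℝ) (hq0 : ∀ i, 0 ≤ q i) (hq1 : ∑ i : Fin I, q i = 1)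
    (β : ℝ) (hβ : β ∈ Set.Ioc (0 : ℝ) 1)
    (hdom : ∀ i : Fin I, β * (∑ j : Fin a, (A i j) ^ 2) / ‖A‖ ^ 2 ≤ q i)
    (hpos : ∀ i : Fin I, (∃ j, A i j ≠ 0) → 0 < q i) :
    ∑ ω : Fin m → Fin I, (∏ t : Fin m, q (ω t)) *
        ‖Aᵀ * B - Aᵀ * (samplingMatrix q ω)ᵀ * samplingMatrix q ω * B‖ ^ 2
      ≤ 1 / (β * m) * (‖A‖ ^ 2 * ‖B‖ ^ 2) := by
  obtain ⟨hβ0, hβ1⟩ := hβ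
  have hmR : ((m:ℝ)) ≠ 0 := Nat.cast_ne_zero.mpr hm.ne'
  -- the per-entry random variable
  set Y : Fin a → Fin b → Fin I → ℝ := fun j k i => A i j * B i k / q i with hY
  have hA0 : ∀ i : Fin I, q i = 0 → ∀ j, A i j = 0 := by
    intro i hqi j
    by_contra hne
    exact absurd hqi (hpos i ⟨j, hne⟩).ne'
  have hcEq : ∀ (j : Fin a) (k : Fin b),
      ∑ i : Fin I, q i * Y j k i = (Aᵀ * B) j k := by
    intro j k
    rw [Matrix.mul_apply]
    refine Finset.sum_congr rfl fun i _ => ?_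
    by_cases hqi : q i = 0
    · simp [hY, hqi, hA0 i hqi j]
    · simp only [hY]
      field_simp
      rw [Matrix.transpose_apply]; ring
  -- entrywise rewrite of the error
  have hentry : ∀ (ω : Fin m → Fin I) (j : Fin a) (k : Fin b),
      (Aᵀ * B - Aᵀ * (samplingMatrix q ω)ᵀ * samplingMatrix q ω * B) j k
        = (∑ i : Fin I, q i * Y j k i) - (1 / m) * ∑ t : Fin m, Y j k (ω t) := by
    intro ω j k
    rw [Matrix.sub_apply, entry_eq hm A B q hq0 ω j k, hcEq j k]
  -- expand the norm as a sum of squared entries, swap sums, apply exp_var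
  have hswap : ∑ ω : Fin m → Fin I, (∏ t : Fin m, q (ω t)) *
        ‖Aᵀ * B - Aᵀ * (samplingMatrix q ω)ᵀ * samplingMatrix q ω * B‖ ^ 2
      = ∑ j : Fin a, ∑ k : Fin b, (1 / m) *
          ((∑ i : Fin I, q i * Y j k i ^ 2) - (∑ i : Fin I, q i * Y j k i) ^ 2) := by
    have expand : ∀ ω : Fin m → Fin I, (∏ t : Fin m, q (ω t)) *
          ‖Aᵀ * B - Aᵀ * (samplingMatrix q ω)ᵀ * samplingMatrix q ω * B‖ ^ 2
        = ∑ j : Fin a, ∑ k : Fin b, (∏ t : Fin m, q (ω t)) *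
            ((∑ i : Fin I, q i * Y j k i) - (1 / m) * ∑ t : Fin m, Y j k (ω t)) ^ 2 := by
      intro ω
      rw [fro_sq, Finset.mul_sum]
      refine Finset.sum_congr rfl fun j _ => ?_
      rw [Finset.mul_sum]
      refine Finset.sum_congr rfl fun k _ => ?_
      rw [hentry ω j k]
    simp_rw [expand]
    rw [Finset.sum_comm]
    refine Finset.sum_congr rfl fun j _ => ?_
    rw [Finset.sum_comm]
    refine Finset.sum_congr rfl fun k _ => ?_
    exact exp_var hm q hq1 (Y j k)
  rw [hswap]
  -- bound the variance term
  have hvar_le : ∀ (j : Fin a) (k : Fin b),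
      (1 / (m:ℝ)) * ((∑ i : Fin I, q i * Y j k i ^ 2) - (∑ i : Fin I, q i * Y j k i) ^ 2)
        ≤ (1 / m) * ∑ i : Fin I, q i * Y j k i ^ 2 := by
    intro j k
    have : (∑ i : Fin I, q i * Y j k i ^ 2) - (∑ i : Fin I, q i * Y j k i) ^ 2
        ≤ ∑ i : Fin I, q i * Y j k i ^ 2 := by nlinarith [sq_nonneg (∑ i : Fin I, q i * Y j k i)]
    exact mul_le_mul_of_nonneg_left this (by positivity)
  calc ∑ j : Fin a, ∑ k : Fin b, (1 / (m:ℝ)) *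
          ((∑ i : Fin I, q i * Y j k i ^ 2) - (∑ i : Fin I, q i * Y j k i) ^ 2)
      ≤ ∑ j : Fin a, ∑ k : Fin b, (1 / (m:ℝ)) * ∑ i : Fin I, q i * Y j k i ^ 2 := by
        exact Finset.sum_le_sum fun j _ => Finset.sum_le_sum fun k _ => hvar_le j k
    _ = (1 / (m:ℝ)) * ∑ i : Fin I,
          ((∑ j : Fin a, A i j ^ 2) / q i) * (∑ k : Fin b, B i k ^ 2) := by
        simp_rw [← Finset.mul_sum]
        congr 1
        have h3 : (∑ j : Fin a, ∑ k : Fin b, ∑ i : Fin I, q i * Y j k i ^ 2)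
            = ∑ i : Fin I, ∑ j : Fin a, ∑ k : Fin b, q i * Y j k i ^ 2 := by
          rw [show (∑ j : Fin a, ∑ k : Fin b, ∑ i : Fin I, q i * Y j k i ^ 2)
              = ∑ j : Fin a, ∑ i : Fin I, ∑ k : Fin b, q i * Y j k i ^ 2 from
            Finset.sum_congr rfl fun j _ => Finset.sum_comm]
          exact Finset.sum_comm
        rw [h3]
        refine Finset.sum_congr rfl fun i _ => ?_
        by_cases hqi : q i = 0
        · simp [hY, hqi]
        · have step : ∀ (j : Fin a) (k : Fin b),
              q i * Y j k i ^ 2 = (A i j ^ 2 / q i) * B i k ^ 2 := by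
            intro j k
            simp only [hY]
            field_simp
          simp_rw [step, ← Finset.mul_sum]
          rw [← Finset.sum_mul, ← Finset.sum_div]
    _ ≤ (1 / (m:ℝ)) * ∑ i : Fin I, (‖A‖ ^ 2 / β) * (∑ k : Fin b, B i k ^ 2) := by
        refine mul_le_mul_of_nonneg_left (Finset.sum_le_sum fun i _ => ?_) (by positivity)
        refine mul_le_mul_of_nonneg_right ?_ (by positivity)
        by_cases hqi : q i = 0
        · have : ∀ j, A i j = 0 := hA0 i hqi
          simp [this]
          positivity
        · have hqi' : 0 < q i := lt_of_le_of_ne (hq0 i) (Ne.symm hqi)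
          by_cases hA : ‖A‖ = 0
          · have hA' : A = 0 := norm_eq_zero.mp hA
            simp [hA', hA]
          · have hAn : 0 < ‖A‖ ^ 2 := by positivity
            have h := hdom i
            rw [div_le_iff₀ hAn] at h
            rw [div_le_div_iff₀ hqi' hβ0]
            nlinarith
    _ = 1 / (β * m) * (‖A‖ ^ 2 * ‖B‖ ^ 2) := by
        rw [← Finset.mul_sum, ← fro_sq B]
        rw [div_mul_eq_mul_div, one_div_mul_eq_div, div_mul_eq_mul_div, mul_comm β (m:ℝ)]
        rw [one_mul, div_div, mul_comm (m:ℝ) β]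
end
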